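/- arXiv:1709.00757 — 2 statements merged into one kernel-verified Lean document; each statement's English description precedes it below -/
import Mathlib

section
/- For every non-autonomous dynamical system f on a compact metric space M and every i ∈ ℤ, the cover entropy equals the spanning-set entropy: sup{ H_i(f,𝒜) : 𝒜 an open cover of M } = H_i(f). -/
open Filter Topology Set

variable {M : Type*} {N : Type*}

/-- The `n`-th composition `f_i^n = f_{i+n-1} ∘ ⋯ ∘ f_i` of a non-autonomous
dynamical system `f = (f_i)_{i ∈ ℤ}` of homeomorphisms of `M`. -/
def nsIter [TopologicalSpace M] (f : ℤ → M ≃ₜ M) (i : ℤ) : ℕ → M → M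
  | 0 => id
  | n + 1 => (f (i + n)) ∘ nsIter f i n

/-- `K` is an `(n, ε)`-spanning set for `f` at time `i`. -/
def IsSpanningSet [PseudoMetricSpace M] (f : ℤ → M ≃ₜ M) (i : ℤ) (n : ℕ) (ε : ℝ)
    (K : Set M) : Prop :=
  ∀ x : M, ∃ y ∈ K, ∀ j < n, dist (nsIter f i j x) (nsIter f i j y) < ε

/-- `E` is an `(n, ε)`-separated set for `f` at time `i`. -/
def IsSeparatedSet [PseudoMetricSpace M] (f : ℤ → M ≃ₜ M) (i : ℤ) (n : ℕ) (ε : ℝ)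
    (E : Set M) : Prop :=
  ∀ x ∈ E, ∀ y ∈ E, x ≠ y → ∃ j < n, ε < dist (nsIter f i j x) (nsIter f i j y)

/-- `r[n,i](ε,f)`: the smallest cardinality of a finite `(n, ε)`-spanning set at time `i`. -/
noncomputable def rSpan [PseudoMetricSpace M] (f : ℤ → M ≃ₜ M) (i : ℤ) (n : ℕ) (ε : ℝ) : ℕ :=
  sInf {k | ∃ K : Finset M, K.card = k ∧ IsSpanningSet f i n ε ↑K}

/-- `s[n,i](ε,f)`: the largest cardinality of an `(n, ε)`-separated set at time `i`. -/
noncomputable def sSep [PseudoMetricSpace M] (f : ℤ → M ≃ₜ M) (i : ℤ) (n : ℕ) (ε : ℝ) : ℕ :=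
  sSup {k | ∃ E : Finset M, E.card = k ∧ IsSeparatedSet f i n ε ↑E}

/-- `r[i](ε,f) = limsup_{n → ∞} (1/n) log r[n,i](ε,f)`. -/
noncomputable def rGrowth [PseudoMetricSpace M] (f : ℤ → M ≃ₜ M) (i : ℤ) (ε : ℝ) : EReal :=
  Filter.atTop.limsup fun n : ℕ => ((Real.log (rSpan f i n ε) / n : ℝ) : EReal)

/-- `s[i](ε,f) = limsup_{n → ∞} (1/n) log s[n,i](ε,f)`. -/
noncomputable def sGrowth [PseudoMetricSpace M] (f : ℤ → M ≃ₜ M) (i : ℤ) (ε : ℝ) : EReal :=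
  Filter.atTop.limsup fun n : ℕ => ((Real.log (sSep f i n ε) / n : ℝ) : EReal)

/-- The topological entropy `H_i(f) = lim_{ε → 0⁺} r[i](ε,f)`; since `ε ↦ r[i](ε,f)` is
antitone, this one-sided limit equals the supremum over `ε > 0`. -/
noncomputable def nsEntropy [PseudoMetricSpace M] (f : ℤ → M ≃ₜ M) (i : ℤ) : EReal :=
  ⨆ (ε : ℝ) (_ : 0 < ε), rGrowth f i ε

/-- `𝒜` is an open cover of `M`: a family of open sets whose union is `M`. -/
def IsOpenCover [TopologicalSpace M] (𝒜 : Set (Set M)) : Prop :=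
  (∀ A ∈ 𝒜, IsOpen A) ∧ ⋃₀ 𝒜 = Set.univ

/-- `N(𝒜)`: the minimal cardinality of a finite subcover of `𝒜`. -/
noncomputable def coverN (𝒜 : Set (Set M)) : ℕ :=
  sInf {k | ∃ ℱ : Finset (Set M), ↑ℱ ⊆ 𝒜 ∧ ⋃₀ (↑ℱ : Set (Set M)) = Set.univ ∧ ℱ.card = k}

/-- The join `⋁_{k=0}^{n-1} (f_i^k)⁻¹(𝒜)`, whose elements are the sets
`⋂_{k<n} (f_i^k)⁻¹(A_k)` with each `A_k ∈ 𝒜`. -/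
def joinCover [TopologicalSpace M] (f : ℤ → M ≃ₜ M) (i : ℤ) (n : ℕ)
    (𝒜 : Set (Set M)) : Set (Set M) :=
  {S | ∃ A : ℕ → Set M, (∀ k < n, A k ∈ 𝒜) ∧ S = ⋂ k ∈ Finset.range n, nsIter f i k ⁻¹' A k}

/-- `H_i(f,𝒜)`: the cover entropy of `f` relative to the open cover `𝒜` at time `i`.
(The `limsup` below is actually a limit, and is finite, for open covers of a compact space.) -/
noncomputable def coverEnt [PseudoMetricSpace M] (f : ℤ → M ≃ₜ M) (i : ℤ)
    (𝒜 : Set (Set M)) : EReal :=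
  Filter.atTop.limsup fun n : ℕ => ((Real.log (coverN (joinCover f i n 𝒜)) / n : ℝ) : EReal)

/-! Both entropies are compared at each scale. If `δ` is a Lebesgue number of `𝒜`, the Bowen
`δ`-ball around each point of an `(n, δ)`-spanning set lies in a member of the `n`-th join of `𝒜`,
so `N(⋁ (f_i^k)⁻¹ 𝒜) ≤ r[n,i](δ)`. Conversely, the members of the `n`-th join of the cover by
`ε/2`-balls have Bowen diameter `< ε`, so one point from each member of a minimal subcover is
`(n, ε)`-spanning and `r[n,i](ε) ≤ N(⋁ (f_i^k)⁻¹ 𝒜)`. Taking `limsup`s and suprema gives both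
inequalities. -/

open Metric

theorem continuous_nsIter [TopologicalSpace M] (f : ℤ → M ≃ₜ M) (i : ℤ) (n : ℕ) :
    Continuous (nsIter f i n) := by
  induction n with
  | zero => exact continuous_id
  | succ n ih => exact (f (i + n)).continuous.comp ih

theorem limsup_log_div_mono {a b : ℕ → ℕ} (h : ∀ n, a n ≤ b n) :
    atTop.limsup (fun n : ℕ => ((Real.log (a n) / n : ℝ) : EReal)) ≤
      atTop.limsup (fun n : ℕ => ((Real.log (b n) / n : ℝ) : EReal)) := by
  refine limsup_le_limsup (Eventually.of_forall fun n => EReal.coe_le_coe_iff.2 ?_)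
  have hlog : Real.log (a n) ≤ Real.log (b n) := by
    rcases Nat.eq_zero_or_pos (a n) with ha | ha
    · simpa [ha] using Real.log_natCast_nonneg (b n)
    · exact Real.log_le_log (by exact_mod_cast ha) (by exact_mod_cast h n)
  exact div_le_div_of_nonneg_right hlog n.cast_nonneg

section OpenCover

variable [TopologicalSpace M] {𝒜 : Set (Set M)}

theorem IsOpenCover.joinCover (h : IsOpenCover 𝒜) (f : ℤ → M ≃ₜ M) (i : ℤ) (n : ℕ) :
    IsOpenCover (joinCover f i n 𝒜) := by
  refine ⟨?_, eq_univ_of_forall fun x => ?_⟩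
  · rintro S ⟨A, hA, rfl⟩
    exact isOpen_biInter_finset fun k hk =>
      (continuous_nsIter f i k).isOpen_preimage _ (h.1 _ (hA k (Finset.mem_range.1 hk)))
  · have hcov : ∀ k : ℕ, ∃ A ∈ 𝒜, nsIter f i k x ∈ A := fun k =>
      mem_sUnion.1 (h.2.symm ▸ mem_univ _)
    choose A hA hxA using hcov
    exact mem_sUnion.2 ⟨_, ⟨A, fun k _ => hA k, rfl⟩, mem_iInter₂.2 fun k _ => hxA k⟩

theorem IsOpenCover.exists_finset_card_eq_coverN [CompactSpace M] (h : IsOpenCover 𝒜) :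
    ∃ ℱ : Finset (Set M), ↑ℱ ⊆ 𝒜 ∧ ⋃₀ (↑ℱ : Set (Set M)) = univ ∧ ℱ.card = coverN 𝒜 := by
  obtain ⟨ℬ, hℬ𝒜, hℬ, hcov⟩ := isCompact_univ.elim_finite_subcover_image (c := id) h.1
    (by simp [← sUnion_eq_biUnion, h.2])
  exact Nat.sInf_mem (s := {k | ∃ ℱ : Finset (Set M), ↑ℱ ⊆ 𝒜 ∧ ⋃₀ (↑ℱ : Set (Set M)) = univ ∧
    ℱ.card = k}) ⟨_, hℬ.toFinset, by simpa using hℬ𝒜, by simpa [sUnion_eq_biUnion] using hcov, rfl⟩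

end OpenCover

section Spanning

theorem isOpenCover_range_ball [PseudoMetricSpace M] {r : ℝ} (hr : 0 < r) :
    IsOpenCover (range fun x : M => ball x r) :=
  ⟨by rintro _ ⟨x, rfl⟩; exact isOpen_ball,
    eq_univ_of_forall fun x => mem_sUnion.2 ⟨ball x r, ⟨x, rfl⟩, mem_ball_self hr⟩⟩

variable [PseudoMetricSpace M] (f : ℤ → M ≃ₜ M) (i : ℤ) (n : ℕ)

theorem dist_nsIter_lt_of_mem_joinCover_range_ball {ε : ℝ} {S : Set M}
    (hS : S ∈ joinCover f i n (range fun c : M => ball c (ε / 2))) {x y : M} (hx : x ∈ S)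
    (hy : y ∈ S) {j : ℕ} (hj : j < n) : dist (nsIter f i j x) (nsIter f i j y) < ε := by
  obtain ⟨A, hA, rfl⟩ := hS
  obtain ⟨c, hc⟩ := hA j hj
  have hxc := mem_iInter₂.1 hx j (Finset.mem_range.2 hj)
  have hyc := mem_iInter₂.1 hy j (Finset.mem_range.2 hj)
  simp only [← hc, mem_preimage, mem_ball] at hxc hyc
  linarith [dist_triangle_right (nsIter f i j x) (nsIter f i j y) c]

theorem exists_isSpanningSet_card_le_of_sUnion_eq_univ {ε : ℝ} {ℱ : Finset (Set M)}
    (hcov : ⋃₀ (↑ℱ : Set (Set M)) = univ)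
    (hsmall : ∀ T ∈ ℱ, ∀ x ∈ T, ∀ y ∈ T, ∀ j < n, dist (nsIter f i j x) (nsIter f i j y) < ε) :
    ∃ K : Finset M, IsSpanningSet f i n ε ↑K ∧ K.card ≤ ℱ.card := by
  classical
  rcases isEmpty_or_nonempty M with _ | _
  · exact ⟨∅, fun x => isEmptyElim x, Nat.zero_le _⟩
  let pick : Set M → M := fun T => Classical.epsilon (· ∈ T)
  refine ⟨ℱ.image pick, fun x => ?_, Finset.card_image_le⟩
  obtain ⟨T, hT, hxT⟩ := mem_sUnion.1 (hcov.symm ▸ mem_univ x)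
  exact ⟨pick T, Finset.mem_image_of_mem _ hT,
    hsmall T hT x hxT _ (Classical.epsilon_spec ⟨x, hxT⟩)⟩

theorem coverN_joinCover_le_card_of_isSpanningSet {𝒜 : Set (Set M)} {δ : ℝ}
    (hδ : ∀ x, ∃ A ∈ 𝒜, ball x δ ⊆ A) {K : Finset M} (hK : IsSpanningSet f i n δ ↑K) :
    coverN (joinCover f i n 𝒜) ≤ K.card := by
  classical
  choose g hg𝒜 hgball using hδ
  let cell : M → Set M := fun y => ⋂ k ∈ Finset.range n, nsIter f i k ⁻¹' g (nsIter f i k y)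
  have hcov : ⋃₀ (↑(K.image cell) : Set (Set M)) = univ := by
    refine eq_univ_of_forall fun x => ?_
    obtain ⟨y, hyK, hy⟩ := hK x
    exact mem_sUnion.2 ⟨cell y, Finset.mem_image_of_mem _ hyK,
      mem_iInter₂.2 fun k hk => hgball _ (mem_ball.2 (hy k (Finset.mem_range.1 hk)))⟩
  have hsub : ↑(K.image cell) ⊆ joinCover f i n 𝒜 := by
    rw [Finset.coe_image]
    rintro _ ⟨y, -, rfl⟩
    exact ⟨fun k => g (nsIter f i k y), fun k _ => hg𝒜 _, rfl⟩
  exact (Nat.sInf_le (by exact ⟨K.image cell, hsub, hcov, rfl⟩)).trans Finset.card_image_le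

variable [CompactSpace M]

theorem exists_isSpanningSet_card_le_coverN_joinCover_range_ball {ε : ℝ} (hε : 0 < ε) :
    ∃ K : Finset M, IsSpanningSet f i n ε ↑K ∧
      K.card ≤ coverN (joinCover f i n (range fun c : M => ball c (ε / 2))) := by
  obtain ⟨ℱ, hℱ, hcov, hcard⟩ :=
    ((isOpenCover_range_ball (half_pos hε)).joinCover f i n).exists_finset_card_eq_coverN
  obtain ⟨K, hK, hKcard⟩ := exists_isSpanningSet_card_le_of_sUnion_eq_univ f i n hcov
    fun T hT _ hx _ hy _ hj => dist_nsIter_lt_of_mem_joinCover_range_ball f i n (hℱ hT) hx hy hj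
  exact ⟨K, hK, hKcard.trans hcard.le⟩

theorem rSpan_le_coverN_joinCover_range_ball {ε : ℝ} (hε : 0 < ε) :
    rSpan f i n ε ≤ coverN (joinCover f i n (range fun c : M => ball c (ε / 2))) := by
  obtain ⟨K, hK, hKcard⟩ := exists_isSpanningSet_card_le_coverN_joinCover_range_ball f i n hε
  exact (Nat.sInf_le (by exact ⟨K, rfl, hK⟩)).trans hKcard

theorem exists_card_eq_rSpan {ε : ℝ} (hε : 0 < ε) :
    ∃ K : Finset M, K.card = rSpan f i n ε ∧ IsSpanningSet f i n ε ↑K := by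
  obtain ⟨K, hK, -⟩ := exists_isSpanningSet_card_le_coverN_joinCover_range_ball f i n hε
  exact Nat.sInf_mem (s := {k | ∃ K : Finset M, K.card = k ∧ IsSpanningSet f i n ε ↑K})
    ⟨K.card, K, rfl, hK⟩

theorem coverEnt_le_nsEntropy {𝒜 : Set (Set M)} (h𝒜 : IsOpenCover 𝒜) :
    coverEnt f i 𝒜 ≤ nsEntropy f i := by
  obtain ⟨δ, hδ, hball⟩ := lebesgue_number_lemma_of_metric_sUnion isCompact_univ h𝒜.1 h𝒜.2.ge
  have hle : ∀ n, coverN (joinCover f i n 𝒜) ≤ rSpan f i n δ := fun n => by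
    obtain ⟨K, hcard, hK⟩ := exists_card_eq_rSpan f i n hδ
    exact hcard ▸ coverN_joinCover_le_card_of_isSpanningSet f i n (fun x => hball x trivial) hK
  exact (limsup_log_div_mono hle).trans (le_iSup₂_of_le δ hδ le_rfl)

theorem rGrowth_le_iSup_coverEnt {ε : ℝ} (hε : 0 < ε) :
    rGrowth f i ε ≤ ⨆ (𝒜 : Set (Set M)) (_ : IsOpenCover 𝒜), coverEnt f i 𝒜 :=
  (limsup_log_div_mono fun n => rSpan_le_coverN_joinCover_range_ball f i n hε).trans
    (le_iSup₂_of_le _ (isOpenCover_range_ball (half_pos hε)) le_rfl)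

end Spanning

/-- for every non-autonomous dynamical system `f` on a compact metric space `M`
and every `i ∈ ℤ`, the cover entropy equals the spanning-set entropy:
`sup { H_i(f,𝒜) : 𝒜 an open cover of M } = H_i(f)`. -/
theorem iSup_coverEnt_eq_nsEntropy [MetricSpace M] [CompactSpace M]
    (f : ℤ → M ≃ₜ M) (i : ℤ) :
    (⨆ (𝒜 : Set (Set M)) (_ : IsOpenCover 𝒜), coverEnt f i 𝒜) = nsEntropy f i :=
  le_antisymm (iSup₂_le fun _ h𝒜 => coverEnt_le_nsEntropy f i h𝒜)
    (iSup₂_le fun _ hε => rGrowth_le_iSup_coverEnt f i hε)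
end

section
/- Let M be a compact metric space and φ a homeomorphism of M with h(φ) ≠ 0. Define the non-autonomous dynamical system f by f_i = id for i ≥ 0 and f_i = φ for i < 0. Then H_i(f) = 0 for every i ∈ ℤ, while the entropy of the inverse system satisfies H^{(-1)}(f) = h(φ) ≠ 0. In particular, there exists a non-autonomous dynamical system whose entropy differs from the entropy of its inverse. -/
open Filter Topology Set

variable {M : Type*} {N : Type*}

/-- The smallest cardinality of a finite `(n, ε)`-spanning set for a single map `φ : M → M`
(Bowen): a set `K` such that every `x ∈ M` has `y ∈ K` with `dist (φ^j x) (φ^j y) < ε`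
for all `0 ≤ j < n`. -/
noncomputable def minSpanMap [PseudoMetricSpace M] (φ : M → M) (n : ℕ) (ε : ℝ) : ℕ :=
  sInf {k | ∃ K : Finset M, K.card = k ∧
    ∀ x : M, ∃ y ∈ K, ∀ j < n, dist (φ^[j] x) (φ^[j] y) < ε}

/-- Bowen's topological entropy `h(φ)` of a single map `φ : M → M`:
`h(φ) = lim_{ε → 0⁺} limsup_{n → ∞} (1/n) log` of the minimal cardinality of an
`(n, ε)`-spanning set; the one-sided limit equals the supremum over `ε > 0`. -/
noncomputable def mapEntropy [PseudoMetricSpace M] (φ : M → M) : EReal :=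
  ⨆ (ε : ℝ) (_ : 0 < ε),
    Filter.atTop.limsup fun n : ℕ => ((Real.log (minSpanMap φ n ε) / n : ℝ) : EReal)

/-!
The orbit of `x` under `f` starting at time `i` only ever applies `φ^[0], …, φ^[-i]`, finitely
many uniformly continuous maps, so a single finite net spans at every length and `H_i(f) = 0`.
The inverse system applies the identity up to time `0` and then `φ⁻¹` forever, so its spanning
numbers are those of `φ⁻¹` with a fixed time shift, which uniform continuity absorbs into `ε`;
hence `H_i(g) = h(φ⁻¹)`, and `h(φ⁻¹) = h(φ)` since reversing orbit segments of length `n`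
(through `φ^[n-1]`) turns spanning sets for `φ` into spanning sets for `φ⁻¹`.
-/

section Spanning

variable [PseudoMetricSpace M]

def IsSpanningFor (F : ℕ → M → M) (n : ℕ) (ε : ℝ) (K : Set M) : Prop :=
  ∀ x : M, ∃ y ∈ K, ∀ j < n, dist (F j x) (F j y) < ε

/-- `rSpan f i` and `minSpanMap ψ` are definitionally `minSpanSeq (nsIter f i)` and
`minSpanSeq (ψ^[·])`, so the lemmas below apply to both. -/
noncomputable def minSpanSeq (F : ℕ → M → M) (n : ℕ) (ε : ℝ) : ℕ :=
  sInf {k | ∃ K : Finset M, K.card = k ∧ IsSpanningFor F n ε ↑K}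

theorem rSpan_eq_minSpanSeq (f : ℤ → M ≃ₜ M) (i : ℤ) (n : ℕ) (ε : ℝ) :
    rSpan f i n ε = minSpanSeq (nsIter f i) n ε := rfl

theorem minSpanSeq_le_of_forall_exists {F G : ℕ → M → M} {n n' : ℕ} {ε ε' : ℝ}
    (hG : ∃ K : Finset M, IsSpanningFor G n' ε' ↑K)
    (h : ∀ K : Finset M, IsSpanningFor G n' ε' ↑K →
      ∃ K' : Finset M, K'.card ≤ K.card ∧ IsSpanningFor F n ε ↑K') :
    minSpanSeq F n ε ≤ minSpanSeq G n' ε' := by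
  obtain ⟨K₀, hK₀⟩ := hG
  obtain ⟨K, hKcard, hK⟩ := Nat.sInf_mem (s := {k | ∃ K : Finset M, K.card = k ∧
    IsSpanningFor G n' ε' ↑K}) ⟨K₀.card, K₀, rfl, hK₀⟩
  obtain ⟨K', hK'card, hK'⟩ := h K hK
  calc minSpanSeq F n ε ≤ K'.card := Nat.sInf_le ⟨K', rfl, hK'⟩
    _ ≤ K.card := hK'card
    _ = minSpanSeq G n' ε' := hKcard

theorem minSpanSeq_comp_sub (G : ℕ → M → M) {m n : ℕ} (hmn : m < n) (ε : ℝ) :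
    minSpanSeq (fun j => G (j - m)) n ε = minSpanSeq G (n - m) ε := by
  have key : ∀ P : ℕ → Prop, (∀ j < n, P (j - m)) ↔ ∀ j < n - m, P j := fun P =>
    ⟨fun h j hj => by simpa using h (j + m) (by omega), fun h j hj => h _ (by omega)⟩
  unfold minSpanSeq IsSpanningFor
  congr! 8 with k K x
  ext y
  exact and_congr_right' (key fun j => dist (G j x) (G j y) < ε)

theorem exists_pos_forall_dist_lt [CompactSpace M] {F : ℕ → M → M}
    (hF : ∀ j, Continuous (F j)) (n : ℕ) {ε : ℝ} (hε : 0 < ε) :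
    ∃ δ > 0, ∀ x y : M, dist x y < δ → ∀ j < n, dist (F j x) (F j y) < ε := by
  have hΦ : UniformContinuous fun (x : M) (j : Fin n) => F j x :=
    CompactSpace.uniformContinuous_of_continuous (continuous_pi fun j => hF j)
  obtain ⟨δ, hδ, hΦδ⟩ := Metric.uniformContinuous_iff.mp hΦ ε hε
  exact ⟨δ, hδ, fun x y hxy j hj => (dist_pi_lt_iff hε).mp (hΦδ hxy) ⟨j, hj⟩⟩

theorem exists_isSpanningFor [CompactSpace M] {F : ℕ → M → M}
    (hF : ∀ j, Continuous (F j)) (n : ℕ) {ε : ℝ} (hε : 0 < ε) :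
    ∃ K : Finset M, IsSpanningFor F n ε ↑K := by
  obtain ⟨δ, hδ, hFδ⟩ := exists_pos_forall_dist_lt hF n hε
  obtain ⟨t, -, ht, hcover⟩ := finite_cover_balls_of_compact (isCompact_univ (X := M)) hδ
  refine ⟨ht.toFinset, fun x => ?_⟩
  obtain ⟨y, hy, hxy⟩ := mem_iUnion₂.mp (hcover (mem_univ x))
  exact ⟨y, by simpa using hy, hFδ x y hxy⟩

end Spanning

section Iterates

variable [TopologicalSpace M]

theorem Homeomorph.iterate_symm_iterate_of_le (φ : M ≃ₜ M) {j k : ℕ} (hjk : j ≤ k) (x : M) :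
    (⇑φ.symm)^[j] ((⇑φ)^[k] x) = (⇑φ)^[k - j] x := by
  conv_lhs => rw [← Nat.add_sub_cancel' hjk, Function.iterate_add_apply]
  exact Function.LeftInverse.iterate φ.symm_apply_apply j _

theorem nsIter_eq_iterate_min {φ : M ≃ₜ M} {f : ℤ → M ≃ₜ M}
    (hf₀ : ∀ i : ℤ, 0 ≤ i → f i = Homeomorph.refl M) (hf₁ : ∀ i : ℤ, i < 0 → f i = φ)
    (i : ℤ) (j : ℕ) : nsIter f i j = (⇑φ)^[min j (-i).toNat] := by
  induction j with
  | zero => rfl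
  | succ j ih =>
    rw [nsIter, ih]
    by_cases h : i + j < 0
    · rw [hf₁ _ h, show min (j + 1) (-i).toNat = min j (-i).toNat + 1 by omega,
        Function.iterate_succ']
    · rw [hf₀ _ (by omega), show min (j + 1) (-i).toNat = min j (-i).toNat by omega]
      rfl

theorem nsIter_eq_iterate_sub {ψ : M ≃ₜ M} {g : ℤ → M ≃ₜ M}
    (hg₀ : ∀ i : ℤ, i ≤ 0 → g i = Homeomorph.refl M) (hg₁ : ∀ i : ℤ, 0 < i → g i = ψ)
    (i : ℤ) (j : ℕ) : nsIter g i j = (⇑ψ)^[j - (1 - i).toNat] := by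
  induction j with
  | zero => rw [Nat.zero_sub]; rfl
  | succ j ih =>
    rw [nsIter, ih]
    by_cases h : i + j ≤ 0
    · rw [hg₀ _ h, show j + 1 - (1 - i).toNat = j - (1 - i).toNat by omega]
      rfl
    · rw [hg₁ _ (by omega), show j + 1 - (1 - i).toNat = j - (1 - i).toNat + 1 by omega,
        Function.iterate_succ']

end Iterates

section SingleMap

variable [PseudoMetricSpace M] [CompactSpace M]

theorem minSpanMap_mono {ψ : M → M} (hψ : Continuous ψ) {n n' : ℕ} (hn : n ≤ n') {ε : ℝ}
    (hε : 0 < ε) : minSpanMap ψ n ε ≤ minSpanMap ψ n' ε :=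
  minSpanSeq_le_of_forall_exists (exists_isSpanningFor (hψ.iterate ·) n' hε) fun K hK =>
    ⟨K, le_rfl, fun x => (hK x).imp fun _ ⟨hy, h⟩ => ⟨hy, fun j hj => h j (hj.trans_le hn)⟩⟩

/-- `δ` comes from uniform continuity of `ψ^[0], …, ψ^[m]`: `δ`-closeness at time `n - 1`
keeps the orbits `ε`-close for `m` more steps. -/
theorem exists_minSpanMap_add_le {ψ : M → M} (hψ : Continuous ψ) (m : ℕ) {ε : ℝ}
    (hε : 0 < ε) :
    ∃ δ > 0, ∀ n, 0 < n → minSpanMap ψ (n + m) ε ≤ minSpanMap ψ n δ := by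
  obtain ⟨δ, hδ, hψδ⟩ := exists_pos_forall_dist_lt (hψ.iterate ·) (m + 1) hε
  refine ⟨δ, hδ, fun n hn => minSpanSeq_le_of_forall_exists
    (exists_isSpanningFor (hψ.iterate ·) n hδ) fun K hK => ⟨K, le_rfl, fun x => ?_⟩⟩
  obtain ⟨y, hy, hxy⟩ := hK x
  refine ⟨y, hy, fun j hj => ?_⟩
  have hsplit : j = (j - min j (n - 1)) + min j (n - 1) := by omega
  rw [hsplit, Function.iterate_add_apply, Function.iterate_add_apply]
  exact hψδ _ _ (hxy _ (by omega)) _ (by omega)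

/-- The image under `φ^[n-1]` of a spanning set for `φ` spans for `φ⁻¹`: the orbit segments of
length `n` are the same, traversed backwards. -/
theorem minSpanMap_symm_le (φ : M ≃ₜ M) (n : ℕ) {ε : ℝ} (hε : 0 < ε) :
    minSpanMap φ.symm n ε ≤ minSpanMap φ n ε := by
  classical
  refine minSpanSeq_le_of_forall_exists (exists_isSpanningFor (φ.continuous.iterate ·) n hε)
    fun K hK => ⟨K.image (⇑φ)^[n - 1], Finset.card_image_le, fun x => ?_⟩
  obtain ⟨y, hy, hxy⟩ := hK ((⇑φ.symm)^[n - 1] x)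
  refine ⟨(⇑φ)^[n - 1] y, by simpa using ⟨y, hy, rfl⟩, fun j hj => ?_⟩
  have hx : (⇑φ)^[n - 1] ((⇑φ.symm)^[n - 1] x) = x :=
    Function.LeftInverse.iterate φ.apply_symm_apply (n - 1) x
  rw [← hx, φ.iterate_symm_iterate_of_le (by omega), φ.iterate_symm_iterate_of_le (by omega)]
  exact hxy _ (by omega)

theorem minSpanMap_symm (φ : M ≃ₜ M) (n : ℕ) {ε : ℝ} (hε : 0 < ε) :
    minSpanMap φ.symm n ε = minSpanMap φ n ε :=
  (minSpanMap_symm_le φ n hε).antisymm (by simpa using minSpanMap_symm_le φ.symm n hε)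

theorem mapEntropy_symm (φ : M ≃ₜ M) : mapEntropy φ.symm = mapEntropy φ := by
  unfold mapEntropy
  refine iSup_congr fun ε => iSup_congr fun hε => ?_
  simp_rw [minSpanMap_symm φ _ hε]

end SingleMap

section GrowthRate

noncomputable def growthRate (u : ℕ → ℕ) : EReal :=
  atTop.limsup fun n : ℕ => ((Real.log (u n) / n : ℝ) : EReal)

theorem growthRate_mono {u v : ℕ → ℕ} (h : ∀ᶠ n in atTop, u n ≤ v n) :
    growthRate u ≤ growthRate v := by
  refine limsup_le_limsup (h.mono fun n huv => EReal.coe_le_coe_iff.mpr ?_)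
  refine div_le_div_of_nonneg_right ?_ n.cast_nonneg
  rcases (u n).eq_zero_or_pos with hu | hu
  · simpa [hu] using Real.log_natCast_nonneg (v n)
  · exact Real.log_le_log (by exact_mod_cast hu) (by exact_mod_cast huv)

theorem growthRate_eq_zero_of_le {u : ℕ → ℕ} {C : ℕ} (h : ∀ n, u n ≤ C) : growthRate u = 0 := by
  have hlim : Tendsto (fun n : ℕ => Real.log (u n) / n) atTop (𝓝 0) := by
    refine squeeze_zero (fun n => div_nonneg (Real.log_natCast_nonneg _) n.cast_nonneg)
      (fun n => div_le_div_of_nonneg_right ?_ n.cast_nonneg)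
      (tendsto_const_div_atTop_nhds_zero_nat (Real.log (C + 1)))
    rcases (u n).eq_zero_or_pos with hu | hu
    · simpa [hu] using Real.log_natCast_nonneg (C + 1)
    · exact Real.log_le_log (by exact_mod_cast hu) (by exact_mod_cast (h n).trans C.le_succ)
  exact (EReal.tendsto_coe.mpr hlim).limsup_eq

variable [PseudoMetricSpace M]

theorem nsEntropy_eq_biSup_growthRate (f : ℤ → M ≃ₜ M) (i : ℤ) :
    nsEntropy f i = ⨆ (ε : ℝ) (_ : 0 < ε), growthRate fun n => rSpan f i n ε := rfl

theorem mapEntropy_eq_biSup_growthRate (ψ : M → M) :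
    mapEntropy ψ = ⨆ (ε : ℝ) (_ : 0 < ε), growthRate fun n => minSpanMap ψ n ε := rfl

end GrowthRate

section Entropy

variable [PseudoMetricSpace M] [CompactSpace M]

theorem nsEntropy_eq_zero {φ : M ≃ₜ M} {f : ℤ → M ≃ₜ M}
    (hf₀ : ∀ i : ℤ, 0 ≤ i → f i = Homeomorph.refl M) (hf₁ : ∀ i : ℤ, i < 0 → f i = φ)
    (i : ℤ) : nsEntropy f i = 0 := by
  have hrate : ∀ ε > 0, (growthRate fun n => rSpan f i n ε) = 0 := fun ε hε =>
    growthRate_eq_zero_of_le fun n => minSpanSeq_le_of_forall_exists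
      (exists_isSpanningFor (φ.continuous.iterate ·) ((-i).toNat + 1) hε) fun K hK =>
        ⟨K, le_rfl, fun x => (hK x).imp fun y ⟨hy, hxy⟩ => ⟨hy, fun j _ => by
          rw [nsIter_eq_iterate_min hf₀ hf₁]
          exact hxy _ (by omega)⟩⟩
  rw [nsEntropy_eq_biSup_growthRate]
  exact le_antisymm (iSup₂_le fun ε hε => (hrate ε hε).le)
    (le_iSup₂_of_le 1 one_pos (hrate 1 one_pos).ge)

theorem nsEntropy_eq_mapEntropy {ψ : M ≃ₜ M} {g : ℤ → M ≃ₜ M}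
    (hg₀ : ∀ i : ℤ, i ≤ 0 → g i = Homeomorph.refl M) (hg₁ : ∀ i : ℤ, 0 < i → g i = ψ)
    (i : ℤ) : nsEntropy g i = mapEntropy ψ := by
  set m := (1 - i).toNat
  have hshift : ∀ n, m < n → ∀ ε, rSpan g i n ε = minSpanMap ψ (n - m) ε := fun n hn ε => by
    rw [rSpan_eq_minSpanSeq, funext (nsIter_eq_iterate_sub hg₀ hg₁ i)]
    exact minSpanSeq_comp_sub (fun j => (⇑ψ)^[j]) hn ε
  rw [nsEntropy_eq_biSup_growthRate, mapEntropy_eq_biSup_growthRate]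
  refine le_antisymm (iSup₂_mono' fun ε hε => ⟨ε, hε, growthRate_mono ?_⟩)
    (iSup₂_mono' fun ε hε => ?_)
  · filter_upwards [eventually_gt_atTop m] with n hn
    rw [hshift n hn]
    exact minSpanMap_mono ψ.continuous (n.sub_le m) hε
  · obtain ⟨δ, hδ, hadd⟩ := exists_minSpanMap_add_le ψ.continuous m hε
    refine ⟨δ, hδ, growthRate_mono ?_⟩
    filter_upwards [eventually_gt_atTop m] with n hn
    rw [hshift n hn]
    simpa only [Nat.sub_add_cancel hn.le] using hadd (n - m) (Nat.sub_pos_of_lt hn)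

end Entropy

/-- let `φ` be a homeomorphism of a compact metric space `M` with `h(φ) ≠ 0`,
and let `f` be the non-autonomous dynamical system with `f_i = id` for `i ≥ 0` and `f_i = φ`
for `i < 0`. Then `H_i(f) = 0` for every `i`, while the inverse system `g_j = f_{-j}⁻¹`
satisfies `H_i(g) = h(φ) ≠ 0` for every `i`; in particular the entropy of `f` differs from
the entropy of its inverse. -/
theorem nsEntropy_ne_nsEntropy_inverse [MetricSpace M] [CompactSpace M]
    (φ : M ≃ₜ M) (hφ : mapEntropy (⇑φ) ≠ 0)
    (f : ℤ → M ≃ₜ M)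
    (hf₀ : ∀ i : ℤ, 0 ≤ i → f i = Homeomorph.refl M)
    (hf₁ : ∀ i : ℤ, i < 0 → f i = φ) :
    (∀ i : ℤ, nsEntropy f i = 0) ∧
    (∀ i : ℤ, nsEntropy (fun j : ℤ => (f (-j)).symm) i = mapEntropy (⇑φ)) ∧
    (∀ i : ℤ, nsEntropy f i ≠ nsEntropy (fun j : ℤ => (f (-j)).symm) i) := by
  have hf : ∀ i, nsEntropy f i = 0 := nsEntropy_eq_zero hf₀ hf₁
  have hg₀ : ∀ j : ℤ, j ≤ 0 → (f (-j)).symm = Homeomorph.refl M := fun j hj => by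
    rw [hf₀ _ (by omega), Homeomorph.refl_symm]
  have hg₁ : ∀ j : ℤ, 0 < j → (f (-j)).symm = φ.symm := fun j hj => by
    rw [hf₁ _ (by omega)]
  have hg : ∀ i, nsEntropy (fun j : ℤ => (f (-j)).symm) i = mapEntropy φ := fun i =>
    (nsEntropy_eq_mapEntropy hg₀ hg₁ i).trans (mapEntropy_symm φ)
  exact ⟨hf, hg, fun i => by rw [hf i, hg i]; exact hφ.symm⟩
end
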